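/- Let T > 0, μ > 0, ν > 0 and C₂ ≥ 0 be real numbers. Then there exists a constant C = C(μ, ν, C₂, T) such that the following holds for every N ∈ ℕ with N ≥ 1, for k = T/N, t_n = n·k, and every C₁ ≥ 0: if (φ_j)_{j=0}^{N} are nonnegative real numbers satisfying φ₀ ≤ C₁ and φ_n ≤ C₁·(1 + t_n^{-1+μ}) + C₂·k·∑_{j=0}^{n-1} t_{n-j}^{-1+ν}·φ_j for all 1 ≤ n ≤ N, then φ_n ≤ C·C₁·(1 + t_n^{-1+μ}) for all 1 ≤ n ≤ N. The constant C is independent of N, k and C₁. -/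
import Mathlib

open Finset Real

lemma aux_rpow_telescope {r a b : ℝ} (hr0 : 0 < r) (hr1 : r ≤ 1) (ha : 0 ≤ a) (hab : a ≤ b) :
    r * b ^ (r - 1) * (b - a) ≤ b ^ r - a ^ r := by
  rcases eq_or_lt_of_le (ha.trans hab) with hb | hb
  · simp [← hb, le_antisymm hab (hb ▸ ha)]
  have hbr : b ^ r = b * b ^ (r - 1) := by
    rw [← Real.rpow_one_add' (le_of_lt hb) (by ring_nf; positivity)]
    ring_nf
  have key : (a / b) ^ r * 1 ^ (1 - r) ≤ r * (a / b) + (1 - r) * 1 :=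
    Real.geom_mean_le_arith_mean2_weighted hr0.le (by linarith) (by positivity) zero_le_one
      (by ring)
  have h2 : a ^ r ≤ r * (a / b) * b ^ r + (1 - r) * b ^ r := by
    have := mul_le_mul_of_nonneg_right key (by positivity : (0:ℝ) ≤ b ^ r)
    rw [Real.div_rpow ha hb.le] at this
    have hbr0 : (0:ℝ) < b ^ r := Real.rpow_pos_of_pos hb r
    calc a ^ r = a ^ r / b ^ r * b ^ r := by field_simp
    _ ≤ (r * (a / b) + (1 - r) * 1) * b ^ r := by
        simpa [one_rpow] using this
    _ = r * (a / b) * b ^ r + (1 - r) * b ^ r := by ring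
  have h3 : r * (a / b) * b ^ r = r * a * b ^ (r - 1) := by
    rw [hbr]; field_simp
  nlinarith [h2, h3, hbr]

lemma aux_geom {lam k : ℝ} (hl : 0 < lam) (hk : 0 < k) (M : ℕ) :
    ∑ m ∈ range M, Real.exp (-(lam * ((m + 1 : ℕ) * k))) ≤ 1 / (lam * k) := by
  set x := Real.exp (-(lam * k)) with hx
  have hx1 : x < 1 := Real.exp_lt_one_iff.mpr (by nlinarith)
  have hx0 : 0 < x := Real.exp_pos _
  have htel : ∀ M : ℕ, (1 - x) * ∑ m ∈ range M, x ^ (m+1) = x - x ^ (M+1) := by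
    intro M
    induction M with
    | zero => simp
    | succ n ih => rw [Finset.sum_range_succ, mul_add, ih]; ring
  have heq : ∀ m : ℕ, Real.exp (-(lam * ((m + 1 : ℕ) * k))) = x ^ (m + 1) := by
    intro m
    rw [hx, ← Real.exp_nat_mul]
    push_cast
    ring_nf
  rw [Finset.sum_congr rfl fun m _ => heq m]
  have hb : ∑ m ∈ range M, x ^ (m+1) ≤ x / (1 - x) := by
    rw [le_div_iff₀ (by linarith)]
    nlinarith [pow_pos hx0 (M+1), htel M]
  refine hb.trans ?_
  rw [div_le_div_iff₀ (by linarith) (by positivity)]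
  have h1 : 1 + lam * k ≤ Real.exp (lam * k) := Real.add_one_le_exp _ |>.trans_eq' (by ring)
  have h2 : x = (Real.exp (lam * k))⁻¹ := by rw [hx, Real.exp_neg]
  have he : 0 < Real.exp (lam * k) := Real.exp_pos _
  have hc : Real.exp (lam * k) * (Real.exp (lam * k))⁻¹ = 1 := mul_inv_cancel₀ he.ne'
  rw [h2, inv_mul_le_iff₀ he]
  nlinarith

lemma aux_kernel {r lam k : ℝ} (hr0 : 0 < r) (hr1 : r ≤ 1) (hl : 1 ≤ lam) (hk : 0 < k)
    (M : ℕ) :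
    k * ∑ m ∈ range M, (((m + 1 : ℕ) : ℝ) * k) ^ (r - 1) * Real.exp (-(lam * ((m + 1 : ℕ) * k)))
      ≤ (1 / r + 1) * lam ^ (-(r / 2)) := by
  have hl0 : (0:ℝ) < lam := lt_of_lt_of_le one_pos hl
  set δ : ℝ := lam ^ (-(1/2) : ℝ) with hδ
  have hδ0 : 0 < δ := Real.rpow_pos_of_pos hl0 _
  set g : ℕ → ℝ := fun i => min (((i : ℝ) * k) ^ r) (δ ^ r) with hg
  have hgmono : Monotone g := by
    intro i j hij
    exact min_le_min (Real.rpow_le_rpow (by positivity) (by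
      apply mul_le_mul_of_nonneg_right _ hk.le; exact_mod_cast hij) hr0.le) le_rfl
  have hterm : ∀ m ∈ range M,
      k * ((((m + 1 : ℕ) : ℝ) * k) ^ (r - 1) * Real.exp (-(lam * ((m + 1 : ℕ) * k))))
      ≤ (g (m+1) - g m) / r + δ ^ (r - 1) * (k * Real.exp (-(lam * ((m + 1 : ℕ) * k)))) := by
    intro m _
    set b : ℝ := ((m + 1 : ℕ) : ℝ) * k with hb
    set a : ℝ := ((m : ℕ) : ℝ) * k with ha
    have hb0 : 0 < b := by positivity
    have ha0 : 0 ≤ a := by positivity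
    have hab : a ≤ b := by
      apply mul_le_mul_of_nonneg_right _ hk.le
      push_cast; linarith
    have hexp0 : 0 < Real.exp (-(lam * b)) := Real.exp_pos _
    have hexp1 : Real.exp (-(lam * b)) ≤ 1 := Real.exp_le_one_iff.mpr (by nlinarith)
    rcases le_or_gt b δ with h | h
    · have hg1 : g (m+1) = b ^ r := min_eq_left (Real.rpow_le_rpow hb0.le h hr0.le)
      have hg2 : g m = a ^ r := min_eq_left (Real.rpow_le_rpow ha0 (hab.trans h) hr0.le)
      have key := aux_rpow_telescope hr0 hr1 ha0 hab
      have hba : b - a = k := by rw [hb, ha]; push_cast; ring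
      rw [hba] at key
      have hbrnn : 0 ≤ b ^ (r-1) := Real.rpow_nonneg hb0.le (r-1)
      have h1 : k * (b ^ (r - 1) * Real.exp (-(lam * b))) ≤ k * b ^ (r-1) := by
        nlinarith [mul_nonneg (mul_nonneg hk.le hbrnn) (sub_nonneg.mpr hexp1)]
      have h2 : k * b ^ (r-1) ≤ (g (m+1) - g m) / r := by
        rw [hg1, hg2, le_div_iff₀ hr0]
        nlinarith
      have h3 : 0 ≤ δ ^ (r - 1) * (k * Real.exp (-(lam * b))) := by positivity
      linarith
    · have h1 : b ^ (r - 1) ≤ δ ^ (r - 1) :=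
        Real.rpow_le_rpow_of_nonpos hδ0 h.le (by linarith)
      have h2 : 0 ≤ g (m+1) - g m := sub_nonneg.mpr (hgmono (Nat.le_succ m))
      have h3 : k * (b ^ (r - 1) * Real.exp (-(lam * b)))
          ≤ δ ^ (r - 1) * (k * Real.exp (-(lam * b))) := by
        calc k * (b ^ (r - 1) * Real.exp (-(lam * b)))
            = b ^ (r-1) * (k * Real.exp (-(lam * b))) := by ring
        _ ≤ δ ^ (r - 1) * (k * Real.exp (-(lam * b))) :=
            mul_le_mul_of_nonneg_right h1 (by positivity)
      have := div_nonneg h2 hr0.le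
      linarith
  have hsum := Finset.sum_le_sum hterm
  rw [Finset.mul_sum]
  refine hsum.trans ?_
  rw [Finset.sum_add_distrib, ← Finset.sum_div, Finset.sum_range_sub g, ← Finset.mul_sum,
    ← Finset.mul_sum]
  have hg0 : g 0 = 0 := by
    simp [hg, Real.zero_rpow hr0.ne', min_eq_left (Real.rpow_nonneg hδ0.le r)]
  have hgM : g M ≤ δ ^ r := min_le_right _ _
  have hgeom : k * ∑ m ∈ range M, Real.exp (-(lam * ((m + 1 : ℕ) * k))) ≤ 1 / lam := by
    have := aux_geom hl0 hk M
    rw [mul_comm]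
    calc (∑ m ∈ range M, Real.exp (-(lam * ((m + 1 : ℕ) * k)))) * k ≤ 1 / (lam * k) * k :=
      mul_le_mul_of_nonneg_right this hk.le
    _ = 1 / lam := by field_simp
  have hδr : δ ^ r = lam ^ (-(r/2)) := by
    rw [hδ, ← Real.rpow_mul hl0.le]; ring_nf
  have hδr1 : δ ^ (r - 1) * (1 / lam) = lam ^ (-(1/2) * (r-1) - 1) := by
    rw [hδ, ← Real.rpow_mul hl0.le, show (1:ℝ)/lam = lam⁻¹ from one_div lam, ← Real.rpow_neg_one lam, ← Real.rpow_add hl0]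
    congr 1
  have hexple : lam ^ (-(1/2) * (r-1) - 1) ≤ lam ^ (-(r/2)) :=
    Real.rpow_le_rpow_of_exponent_le hl (by linarith)
  have hstep2 : δ ^ (r-1) * (k * ∑ m ∈ range M, Real.exp (-(lam * ((m + 1 : ℕ) * k))))
      ≤ lam ^ (-(r/2)) := by
    calc δ ^ (r-1) * (k * ∑ m ∈ range M, Real.exp (-(lam * ((m + 1 : ℕ) * k))))
        ≤ δ ^ (r-1) * (1 / lam) := by
          apply mul_le_mul_of_nonneg_left hgeom (by positivity)
    _ = lam ^ (-(1/2) * (r-1) - 1) := hδr1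
    _ ≤ lam ^ (-(r/2)) := hexple
  have hstep1 : (g M - g 0) / r ≤ 1 / r * lam ^ (-(r/2)) := by
    rw [hg0, sub_zero, div_le_iff₀ hr0]
    calc g M ≤ δ ^ r := hgM
    _ = lam ^ (-(r/2)) := hδr
    _ = 1 / r * lam ^ (-(r/2)) * r := by field_simp
  linarith

lemma aux_decay {ν lam t T : ℝ} (hν0 : 0 < ν) (hν1 : ν ≤ 1) (hl : 1 ≤ lam)
    (ht : 0 < t) (htT : t ≤ T) :
    t ^ ν * Real.exp (-(lam * t / 2)) ≤ (1 + 2 * T ^ ν) * lam ^ (-(ν/2)) := by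
  have hl0 : (0:ℝ) < lam := lt_of_lt_of_le one_pos hl
  have hT0 : 0 < T := lt_of_lt_of_le ht htT
  have hTν : 0 < T ^ ν := Real.rpow_pos_of_pos hT0 ν
  have hlν : 0 < lam ^ (-(ν/2)) := Real.rpow_pos_of_pos hl0 _
  rcases le_or_gt t (lam ^ (-(1/2):ℝ)) with h | h
  · have h1 : t ^ ν ≤ lam ^ (-(ν/2)) := by
      calc t ^ ν ≤ (lam ^ (-(1/2):ℝ)) ^ ν := Real.rpow_le_rpow ht.le h hν0.le
      _ = lam ^ (-(ν/2)) := by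
          rw [← Real.rpow_mul hl0.le]; congr 1; ring
    have h2 : Real.exp (-(lam * t / 2)) ≤ 1 := Real.exp_le_one_iff.mpr (by nlinarith)
    calc t ^ ν * Real.exp (-(lam * t / 2)) ≤ lam ^ (-(ν/2)) * 1 :=
          mul_le_mul h1 h2 (Real.exp_pos _).le hlν.le
      _ ≤ (1 + 2 * T ^ ν) * lam ^ (-(ν/2)) := by nlinarith
  · have hδ0 : (0:ℝ) < lam ^ (-(1/2):ℝ) := Real.rpow_pos_of_pos hl0 _
    have h1 : t ^ ν ≤ T ^ ν := Real.rpow_le_rpow ht.le htT hν0.le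
    have h2 : Real.exp (-(lam * t / 2)) ≤ 2 / (lam * t) := by
      have hx : lam * t / 2 + 1 ≤ Real.exp (lam * t / 2) := Real.add_one_le_exp _
      have he : 0 < Real.exp (lam * t / 2) := Real.exp_pos _
      rw [Real.exp_neg, inv_le_comm₀ he (by positivity), inv_div]
      linarith
    have h3 : 2 / (lam * t) ≤ 2 * lam ^ (-(1/2):ℝ) := by
      rw [div_le_iff₀ (by positivity)]
      have : lam ^ (-(1/2):ℝ) * lam = lam ^ ((1/2):ℝ) := by
        nth_rewrite 2 [← Real.rpow_one lam]
        rw [← Real.rpow_add hl0]; congr 1; ring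
      calc (2:ℝ) = 2 * (lam ^ (-(1/2):ℝ) * lam ^ ((1/2):ℝ)) := by
            rw [← Real.rpow_add hl0]; norm_num
        _ ≤ 2 * (lam ^ (-(1/2):ℝ) * lam * t) := by
          rw [mul_assoc (lam ^ (-(1/2):ℝ))]
          apply mul_le_mul_of_nonneg_left _ (by norm_num)
          apply mul_le_mul_of_nonneg_left _ hδ0.le
          calc lam ^ ((1/2):ℝ) = lam * lam ^ (-(1/2):ℝ) := by
                nth_rewrite 2 [← Real.rpow_one lam]
                rw [← Real.rpow_add hl0]; congr 1; ring
            _ ≤ lam * t := mul_le_mul_of_nonneg_left h.le hl0.le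
        _ = 2 * lam ^ (-(1/2):ℝ) * (lam * t) := by ring
    have h4 : (lam ^ (-(1/2):ℝ)) ≤ lam ^ (-(ν/2)) :=
      Real.rpow_le_rpow_of_exponent_le hl (by linarith)
    calc t ^ ν * Real.exp (-(lam * t / 2)) ≤ T ^ ν * (2 * lam ^ (-(1/2):ℝ)) :=
          mul_le_mul h1 (h2.trans h3) (Real.exp_pos _).le hTν.le
      _ ≤ T ^ ν * (2 * lam ^ (-(ν/2))) := by
          apply mul_le_mul_of_nonneg_left _ hTν.le
          exact mul_le_mul_of_nonneg_left h4 (by norm_num)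
      _ ≤ (1 + 2 * T ^ ν) * lam ^ (-(ν/2)) := by nlinarith

lemma aux_sum_sing {μ k T : ℝ} (hμ0 : 0 < μ) (hμ1 : μ ≤ 1) (hk : 0 < k) (hkT : k ≤ T)
    (n : ℕ) (hn : 1 ≤ n) :
    k * ∑ j ∈ range n, ((j : ℝ) * k) ^ (μ - 1) ≤ (T ^ (1 - μ) + 1 / μ) * ((n : ℝ) * k) ^ μ := by
  have hT0 : 0 < T := lt_of_lt_of_le hk hkT
  obtain ⟨m, rfl⟩ : ∃ m, n = m + 1 := ⟨n - 1, by omega⟩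
  have hn1 : (1:ℝ) ≤ ((m:ℝ) + 1) := by have := Nat.cast_nonneg (α := ℝ) m; linarith
  have hnk : 0 < ((m+1:ℕ):ℝ) * k := by positivity
  have hnkμ : 0 < (((m+1:ℕ):ℝ) * k) ^ μ := Real.rpow_pos_of_pos hnk μ
  rw [Finset.sum_range_succ', mul_add]
  have h0 : k * (((0:ℕ):ℝ) * k) ^ (μ - 1) ≤ T ^ (1 - μ) * (((m+1:ℕ):ℝ) * k) ^ μ := by
    have hz : ((0:ℝ) * k) ^ (μ - 1) ≤ 1 := by
      rw [zero_mul]; exact Real.zero_rpow_le_one _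
    have hkk : k = k ^ μ * k ^ (1 - μ) := by
      rw [← Real.rpow_add hk]; norm_num
    have h1 : k ^ (1-μ) ≤ T ^ (1-μ) := Real.rpow_le_rpow hk.le hkT (by linarith)
    have h2 : k ^ μ ≤ (((m+1:ℕ):ℝ) * k) ^ μ := by
      apply Real.rpow_le_rpow hk.le _ hμ0.le
      push_cast; nlinarith
    calc k * (((0:ℕ):ℝ) * k) ^ (μ - 1) ≤ k := by
          have hz2 : (0:ℝ) ≤ ((0:ℝ) * k) ^ (μ - 1) := Real.rpow_nonneg (by norm_num) _
          simp only [Nat.cast_zero]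
          nlinarith
    _ = k ^ μ * k ^ (1-μ) := hkk
    _ ≤ (((m+1:ℕ):ℝ)*k) ^ μ * T ^ (1-μ) :=
        mul_le_mul h2 h1 (by positivity) (by positivity)
    _ = T ^ (1 - μ) * (((m+1:ℕ):ℝ) * k) ^ μ := by ring
  set f : ℕ → ℝ := fun i => (((i:ℕ):ℝ) * k) ^ μ / μ with hf
  have hterm : ∀ i ∈ range m, k * ((((i+1:ℕ)):ℝ) * k) ^ (μ - 1) ≤ f (i+1) - f i := by
    intro i _
    have hab : ((i:ℝ)) * k ≤ ((i:ℝ)+1) * k := by nlinarith [Nat.cast_nonneg (α := ℝ) i]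
    have key := aux_rpow_telescope hμ0 hμ1 (by positivity : (0:ℝ) ≤ (i:ℝ) * k) hab
    have hba : ((i:ℝ)+1) * k - (i:ℝ) * k = k := by ring
    rw [hba] at key
    rw [hf]
    simp only [div_sub_div_same]
    rw [le_div_iff₀ hμ0]
    push_cast
    nlinarith
  have htel : k * ∑ i ∈ range m, ((((i+1:ℕ)):ℝ) * k) ^ (μ - 1)
      ≤ 1 / μ * (((m+1:ℕ):ℝ) * k) ^ μ := by
    rw [Finset.mul_sum]
    calc ∑ i ∈ range m, k * ((((i+1:ℕ)):ℝ) * k) ^ (μ - 1)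
        ≤ ∑ i ∈ range m, (f (i+1) - f i) := Finset.sum_le_sum hterm
    _ = f m - f 0 := Finset.sum_range_sub f m
    _ ≤ 1 / μ * (((m+1:ℕ):ℝ) * k) ^ μ := by
        have hf0 : f 0 = 0 := by
          rw [hf]; simp [Real.zero_rpow hμ0.ne']
        have hfm : f m ≤ 1 / μ * (((m+1:ℕ):ℝ) * k) ^ μ := by
          rw [hf, div_le_iff₀ hμ0]
          have : (((m:ℕ):ℝ) * k) ^ μ ≤ (((m+1:ℕ):ℝ) * k) ^ μ := by
            apply Real.rpow_le_rpow (by positivity) _ hμ0.le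
            push_cast; nlinarith
          calc (((m:ℕ):ℝ) * k) ^ μ ≤ (((m+1:ℕ):ℝ) * k) ^ μ := this
            _ = 1 / μ * (((m+1:ℕ):ℝ) * k) ^ μ * μ := by field_simp
        linarith [hf0, hfm]
    _ = 1 / μ * (((m+1:ℕ):ℝ) * k) ^ μ := by rfl
  calc k * ∑ i ∈ range m, ((((i+1:ℕ)):ℝ) * k) ^ (μ - 1) + k * (((0:ℕ):ℝ) * k) ^ (μ - 1)
      ≤ 1 / μ * (((m+1:ℕ):ℝ) * k) ^ μ + T ^ (1 - μ) * (((m+1:ℕ):ℝ) * k) ^ μ :=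
        add_le_add htel h0
    _ = (T ^ (1 - μ) + 1 / μ) * (((m+1:ℕ):ℝ) * k) ^ μ := by ring

set_option maxHeartbeats 1000000 in
lemma aux_main_sum {μ ν lam k T : ℝ} (hμ0 : 0 < μ) (hμ1 : μ ≤ 1) (hν0 : 0 < ν) (hν1 : ν ≤ 1)
    (hl : 1 ≤ lam) (hk : 0 < k) (hkT : k ≤ T) {n : ℕ} (hn : 1 ≤ n) (hnT : (n:ℝ) * k ≤ T) :
    k * ∑ j ∈ range n, (((n - j : ℕ):ℝ) * k) ^ (ν - 1) *
        ((1 + ((j:ℝ) * k) ^ (μ - 1)) * Real.exp (lam * ((j:ℝ) * k)))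
    ≤ (3 * (1/ν + 1) + 2 * (T ^ (1-μ) + 1/μ) * (1 + 2 * T ^ ν)) * lam ^ (-(ν/2)) *
        ((1 + ((n:ℝ) * k) ^ (μ - 1)) * Real.exp (lam * ((n:ℝ) * k))) := by
  have hl0 : (0:ℝ) < lam := lt_of_lt_of_le one_pos hl
  have hn0 : (0:ℝ) < (n:ℝ) := by exact_mod_cast hn
  have hnk : 0 < (n:ℝ) * k := by positivity
  have hlν : 0 < lam ^ (-(ν/2)) := Real.rpow_pos_of_pos hl0 _
  have hT0 : 0 < T := lt_of_lt_of_le hk hkT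
  set u : ℕ → ℝ := fun j => (((n - j : ℕ):ℝ) * k) ^ (ν - 1) *
      Real.exp (-(lam * (((n - j : ℕ):ℝ) * k))) with hu
  have hu0 : ∀ j, 0 ≤ u j := fun j => by rw [hu]; positivity
  have hsplit : ∀ j ∈ range n,
      (((n - j : ℕ):ℝ) * k) ^ (ν - 1) *
        ((1 + ((j:ℝ) * k) ^ (μ - 1)) * Real.exp (lam * ((j:ℝ) * k)))
      = Real.exp (lam * ((n:ℝ)*k)) * (u j + u j * ((j:ℝ) * k) ^ (μ - 1)) := by
    intro j hj
    have hjn : j ≤ n := le_of_lt (mem_range.mp hj)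
    have hc : (((n - j : ℕ):ℝ)) = (n:ℝ) - (j:ℝ) := by
      rw [Nat.cast_sub hjn]
    have hexp : Real.exp (lam * ((j:ℝ) * k)) =
        Real.exp (lam * ((n:ℝ) * k)) * Real.exp (-(lam * (((n - j:ℕ):ℝ) * k))) := by
      rw [← Real.exp_add]
      congr 1
      rw [hc]; ring
    rw [hexp, hu]
    ring
  rw [Finset.sum_congr rfl hsplit, ← Finset.mul_sum]
  -- A bound
  have hA : k * ∑ j ∈ range n, u j ≤ (1/ν + 1) * lam ^ (-(ν/2)) := by
    have hreflect : ∑ j ∈ range n, u j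
        = ∑ m ∈ range n, (((m + 1 : ℕ) : ℝ) * k) ^ (ν - 1) *
            Real.exp (-(lam * ((m + 1 : ℕ) * k))) := by
      rw [← Finset.sum_range_reflect (fun m => (((m + 1 : ℕ) : ℝ) * k) ^ (ν - 1) *
            Real.exp (-(lam * ((m + 1 : ℕ) * k)))) n]
      apply Finset.sum_congr rfl
      intro j hj
      have hjn : j < n := mem_range.mp hj
      have hnj : n - j = (n - 1 - j) + 1 := by omega
      rw [hu]
      simp only
      rw [hnj]
    rw [hreflect]
    exact aux_kernel hν0 hν1 hl hk n
  -- B1 bound : j with ¬ (2*j < n)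
  have hB1 : ∀ j ∈ (range n).filter (fun j => ¬ (2*j < n)),
      u j * ((j:ℝ) * k) ^ (μ - 1) ≤ u j * (2 * ((n:ℝ)*k) ^ (μ - 1)) := by
    intro j hj
    rw [Finset.mem_filter] at hj
    obtain ⟨hj1, hj2⟩ := hj
    have h2j : (n:ℝ) ≤ 2 * (j:ℝ) := by
      have : n ≤ 2 * j := by omega
      exact_mod_cast this
    have hhalf : 0 < (n:ℝ) * k / 2 := by positivity
    have hjk : (n:ℝ) * k / 2 ≤ (j:ℝ) * k := by nlinarith
    have h1 : ((j:ℝ) * k) ^ (μ - 1) ≤ ((n:ℝ) * k / 2) ^ (μ - 1) :=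
      Real.rpow_le_rpow_of_nonpos hhalf hjk (by linarith)
    have h2 : ((n:ℝ) * k / 2) ^ (μ - 1) ≤ 2 * ((n:ℝ)*k) ^ (μ - 1) := by
      rw [Real.div_rpow hnk.le (by norm_num)]
      rw [div_le_iff₀ (Real.rpow_pos_of_pos two_pos _)]
      have h3 : (2:ℝ) ^ (-1:ℝ) ≤ (2:ℝ) ^ (μ - 1) :=
        Real.rpow_le_rpow_of_exponent_le one_le_two (by linarith)
      have h4 : ((2:ℝ)) ^ (-1:ℝ) = 1/2 := by
        rw [Real.rpow_neg_one]; norm_num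
      have h5 : (0:ℝ) ≤ ((n:ℝ)*k) ^ (μ-1) := Real.rpow_nonneg hnk.le _
      have h6 : (0:ℝ) ≤ 2 * (2:ℝ) ^ (μ - 1) - 1 := by rw [h4] at h3; linarith
      nlinarith [mul_nonneg h5 h6]
    exact mul_le_mul_of_nonneg_left (h1.trans h2) (hu0 j)
  -- B2 bound : j with 2*j < n
  have hB2 : ∀ j ∈ (range n).filter (fun j => 2*j < n),
      u j * ((j:ℝ) * k) ^ (μ - 1)
      ≤ 2 * ((n:ℝ)*k) ^ (ν - 1) * Real.exp (-(lam * ((n:ℝ)*k) / 2)) * ((j:ℝ) * k) ^ (μ - 1) := by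
    intro j hj
    rw [Finset.mem_filter] at hj
    obtain ⟨hj1, hj2⟩ := hj
    have hjn : j < n := mem_range.mp hj1
    have hd : (n:ℝ) ≤ 2 * (((n - j : ℕ)):ℝ) := by
      have : n ≤ 2 * (n - j) := by omega
      exact_mod_cast this
    have hhalf : 0 < (n:ℝ) * k / 2 := by positivity
    have hdk : (n:ℝ) * k / 2 ≤ (((n - j:ℕ)):ℝ) * k := by nlinarith
    have h1 : ((((n - j:ℕ)):ℝ) * k) ^ (ν - 1) ≤ ((n:ℝ) * k / 2) ^ (ν - 1) :=
      Real.rpow_le_rpow_of_nonpos hhalf hdk (by linarith)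
    have h2 : ((n:ℝ) * k / 2) ^ (ν - 1) ≤ 2 * ((n:ℝ)*k) ^ (ν - 1) := by
      rw [Real.div_rpow hnk.le (by norm_num)]
      rw [div_le_iff₀ (Real.rpow_pos_of_pos two_pos _)]
      have h3 : (2:ℝ) ^ (-1:ℝ) ≤ (2:ℝ) ^ (ν - 1) :=
        Real.rpow_le_rpow_of_exponent_le one_le_two (by linarith)
      have h4 : ((2:ℝ)) ^ (-1:ℝ) = 1/2 := by
        rw [Real.rpow_neg_one]; norm_num
      have h5 : (0:ℝ) ≤ ((n:ℝ)*k) ^ (ν-1) := Real.rpow_nonneg hnk.le _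
      have h6 : (0:ℝ) ≤ 2 * (2:ℝ) ^ (ν - 1) - 1 := by rw [h4] at h3; linarith
      nlinarith [mul_nonneg h5 h6]
    have h6 : Real.exp (-(lam * (((n - j:ℕ):ℝ) * k))) ≤ Real.exp (-(lam * ((n:ℝ)*k) / 2)) := by
      apply Real.exp_le_exp.mpr
      nlinarith
    have h7 : u j ≤ 2 * ((n:ℝ)*k) ^ (ν - 1) * Real.exp (-(lam * ((n:ℝ)*k) / 2)) := by
      rw [hu]
      simp only
      apply mul_le_mul (h1.trans h2) h6 (Real.exp_pos _).le
      positivity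
    exact mul_le_mul_of_nonneg_right h7 (Real.rpow_nonneg (by positivity) _)
  -- assemble B
  have hBsum : ∑ j ∈ range n, u j * ((j:ℝ) * k) ^ (μ - 1)
      = ∑ j ∈ (range n).filter (fun j => 2*j < n), u j * ((j:ℝ) * k) ^ (μ - 1)
      + ∑ j ∈ (range n).filter (fun j => ¬ (2*j < n)), u j * ((j:ℝ) * k) ^ (μ - 1) :=
    (Finset.sum_filter_add_sum_filter_not (range n) _ _).symm
  have hB1' : k * ∑ j ∈ (range n).filter (fun j => ¬ (2*j < n)), u j * ((j:ℝ) * k) ^ (μ - 1)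
      ≤ 2 * ((n:ℝ)*k) ^ (μ - 1) * ((1/ν + 1) * lam ^ (-(ν/2))) := by
    have step1 : ∑ j ∈ (range n).filter (fun j => ¬ (2*j < n)), u j * ((j:ℝ) * k) ^ (μ - 1)
        ≤ ∑ j ∈ (range n).filter (fun j => ¬ (2*j < n)), u j * (2 * ((n:ℝ)*k) ^ (μ - 1)) :=
      Finset.sum_le_sum hB1
    have step2 : ∑ j ∈ (range n).filter (fun j => ¬ (2*j < n)), u j * (2 * ((n:ℝ)*k) ^ (μ - 1))
        ≤ ∑ j ∈ range n, u j * (2 * ((n:ℝ)*k) ^ (μ - 1)) := by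
      apply Finset.sum_le_sum_of_subset_of_nonneg (Finset.filter_subset _ _)
      intro i _ _
      have := hu0 i
      have : (0:ℝ) ≤ ((n:ℝ)*k) ^ (μ-1) := Real.rpow_nonneg hnk.le _
      positivity
    calc k * ∑ j ∈ (range n).filter (fun j => ¬ (2*j < n)), u j * ((j:ℝ) * k) ^ (μ - 1)
        ≤ k * ∑ j ∈ range n, u j * (2 * ((n:ℝ)*k) ^ (μ - 1)) :=
          mul_le_mul_of_nonneg_left (step1.trans step2) hk.le
      _ = 2 * ((n:ℝ)*k) ^ (μ - 1) * (k * ∑ j ∈ range n, u j) := by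
          rw [← Finset.sum_mul]; ring
      _ ≤ 2 * ((n:ℝ)*k) ^ (μ - 1) * ((1/ν + 1) * lam ^ (-(ν/2))) := by
          apply mul_le_mul_of_nonneg_left hA
          have : (0:ℝ) ≤ ((n:ℝ)*k) ^ (μ-1) := Real.rpow_nonneg hnk.le _
          positivity
  have hB2' : k * ∑ j ∈ (range n).filter (fun j => 2*j < n), u j * ((j:ℝ) * k) ^ (μ - 1)
      ≤ 2 * (T ^ (1-μ) + 1/μ) * (1 + 2 * T ^ ν) * lam ^ (-(ν/2)) * ((n:ℝ)*k) ^ (μ - 1) := by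
    have hwnn : ∀ i : ℕ, (0:ℝ) ≤ 2 * ((n:ℝ)*k) ^ (ν - 1) * Real.exp (-(lam * ((n:ℝ)*k) / 2))
        * ((i:ℝ) * k) ^ (μ - 1) := by
      intro i
      have h1 : (0:ℝ) ≤ ((n:ℝ)*k) ^ (ν-1) := Real.rpow_nonneg hnk.le _
      have h2 : (0:ℝ) ≤ ((i:ℝ)*k) ^ (μ-1) := Real.rpow_nonneg (by positivity) _
      positivity
    have step1 := Finset.sum_le_sum hB2
    have step2 : ∑ j ∈ (range n).filter (fun j => 2*j < n),
          2 * ((n:ℝ)*k) ^ (ν - 1) * Real.exp (-(lam * ((n:ℝ)*k) / 2)) * ((j:ℝ) * k) ^ (μ - 1)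
        ≤ ∑ j ∈ range n,
          2 * ((n:ℝ)*k) ^ (ν - 1) * Real.exp (-(lam * ((n:ℝ)*k) / 2)) * ((j:ℝ) * k) ^ (μ - 1) :=
      Finset.sum_le_sum_of_subset_of_nonneg (Finset.filter_subset _ _) (fun i _ _ => hwnn i)
    have hpow : ((n:ℝ)*k) ^ (ν-1) * ((n:ℝ)*k) ^ μ = ((n:ℝ)*k) ^ (μ-1) * ((n:ℝ)*k) ^ ν := by
      rw [← Real.rpow_add hnk, ← Real.rpow_add hnk]
      congr 1; ring
    have hnknn : (0:ℝ) ≤ ((n:ℝ)*k) ^ (μ-1) := Real.rpow_nonneg hnk.le _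
    calc k * ∑ j ∈ (range n).filter (fun j => 2*j < n), u j * ((j:ℝ) * k) ^ (μ - 1)
        ≤ k * ∑ j ∈ range n,
            2 * ((n:ℝ)*k) ^ (ν - 1) * Real.exp (-(lam * ((n:ℝ)*k) / 2)) * ((j:ℝ) * k) ^ (μ - 1) :=
          mul_le_mul_of_nonneg_left (step1.trans step2) hk.le
      _ = 2 * ((n:ℝ)*k) ^ (ν - 1) * Real.exp (-(lam * ((n:ℝ)*k) / 2)) *
            (k * ∑ j ∈ range n, ((j:ℝ) * k) ^ (μ - 1)) := by
          rw [← Finset.mul_sum]; ring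
      _ ≤ 2 * ((n:ℝ)*k) ^ (ν - 1) * Real.exp (-(lam * ((n:ℝ)*k) / 2)) *
            ((T ^ (1 - μ) + 1 / μ) * ((n:ℝ) * k) ^ μ) := by
          apply mul_le_mul_of_nonneg_left (aux_sum_sing hμ0 hμ1 hk hkT n hn)
          have h1 : (0:ℝ) ≤ ((n:ℝ)*k) ^ (ν-1) := Real.rpow_nonneg hnk.le _
          positivity
      _ = 2 * (T ^ (1-μ) + 1/μ) * (((n:ℝ)*k) ^ (ν-1) * ((n:ℝ)*k) ^ μ) *
            Real.exp (-(lam * ((n:ℝ)*k) / 2)) := by ring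
      _ = 2 * (T ^ (1-μ) + 1/μ) * ((n:ℝ)*k) ^ (μ-1) *
            (((n:ℝ)*k) ^ ν * Real.exp (-(lam * ((n:ℝ)*k) / 2))) := by rw [hpow]; ring
      _ ≤ 2 * (T ^ (1-μ) + 1/μ) * ((n:ℝ)*k) ^ (μ-1) *
            ((1 + 2 * T ^ ν) * lam ^ (-(ν/2))) := by
          apply mul_le_mul_of_nonneg_left (aux_decay hν0 hν1 hl hnk hnT)
          have h2 : (0:ℝ) ≤ T ^ (1-μ) := Real.rpow_nonneg hT0.le _
          positivity
      _ = 2 * (T ^ (1-μ) + 1/μ) * (1 + 2 * T ^ ν) * lam ^ (-(ν/2)) * ((n:ℝ)*k) ^ (μ - 1) := by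
          ring
  -- combine
  have hS : k * ∑ j ∈ range n, (u j + u j * ((j:ℝ) * k) ^ (μ - 1))
      ≤ (3 * (1/ν + 1) + 2 * (T ^ (1-μ) + 1/μ) * (1 + 2 * T ^ ν)) * lam ^ (-(ν/2)) *
        (1 + ((n:ℝ) * k) ^ (μ - 1)) := by
    have hx : (0:ℝ) ≤ ((n:ℝ)*k) ^ (μ-1) := Real.rpow_nonneg hnk.le _
    have ha : (0:ℝ) < 1/ν + 1 := by positivity
    have hb : (0:ℝ) ≤ T ^ (1-μ) + 1/μ := by
      have : (0:ℝ) ≤ T ^ (1-μ) := Real.rpow_nonneg hT0.le _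
      positivity
    have hc : (0:ℝ) ≤ 1 + 2 * T ^ ν := by
      have : (0:ℝ) ≤ T ^ ν := Real.rpow_nonneg hT0.le _
      positivity
    have heq : k * ∑ j ∈ range n, (u j + u j * ((j:ℝ) * k) ^ (μ - 1))
        = k * ∑ j ∈ range n, u j
        + (k * ∑ j ∈ (range n).filter (fun j => 2*j < n), u j * ((j:ℝ) * k) ^ (μ - 1)
           + k * ∑ j ∈ (range n).filter (fun j => ¬ (2*j < n)), u j * ((j:ℝ) * k) ^ (μ - 1)) := by
      rw [Finset.sum_add_distrib, hBsum]; ring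
    rw [heq]
    have htot := add_le_add hA (add_le_add hB2' hB1')
    have halg : ∀ a b c L x : ℝ, 0 ≤ a → 0 ≤ b → 0 ≤ c → 0 ≤ L → 0 ≤ x →
        a * L + (2*b*c*L*x + 2*x*(a*L)) ≤ (3*a + 2*b*c) * L * (1+x) := by
      intros a b c L x ha' hb' hc' hL' hx'
      nlinarith [mul_nonneg ha' hL', mul_nonneg (mul_nonneg hb' hc') hL',
        mul_nonneg (mul_nonneg ha' hL') hx']
    have hkey := halg (1/ν + 1) (T ^ (1-μ) + 1/μ) (1 + 2 * T ^ ν) (lam ^ (-(ν/2)))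
      (((n:ℝ)*k) ^ (μ-1)) ha.le hb hc hlν.le hx
    refine htot.trans ?_
    linarith [hkey]
  calc k * (Real.exp (lam * ((n:ℝ)*k)) * ∑ j ∈ range n, (u j + u j * ((j:ℝ) * k) ^ (μ - 1)))
      = (k * ∑ j ∈ range n, (u j + u j * ((j:ℝ) * k) ^ (μ - 1))) * Real.exp (lam * ((n:ℝ)*k)) := by
        ring
    _ ≤ (3 * (1/ν + 1) + 2 * (T ^ (1-μ) + 1/μ) * (1 + 2 * T ^ ν)) * lam ^ (-(ν/2)) *
          (1 + ((n:ℝ) * k) ^ (μ - 1)) * Real.exp (lam * ((n:ℝ)*k)) :=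
        mul_le_mul_of_nonneg_right hS (Real.exp_pos _).le
    _ = (3 * (1/ν + 1) + 2 * (T ^ (1-μ) + 1/μ) * (1 + 2 * T ^ ν)) * lam ^ (-(ν/2)) *
          ((1 + ((n:ℝ) * k) ^ (μ - 1)) * Real.exp (lam * ((n:ℝ)*k))) := by ring

set_option maxHeartbeats 1000000 in
/-- Discrete Gronwall lemma with singular power weights (Lemma 2.1 of the paper).
`t_n = n * k` with `k = T / N`; powers are real powers (`Real.rpow`). -/
theorem discrete_gronwall_singular
    (T μ ν C₂ : ℝ) (hT : 0 < T) (hμ : 0 < μ) (hν : 0 < ν) (hC₂ : 0 ≤ C₂) :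
    ∃ C : ℝ, ∀ (N : ℕ), 1 ≤ N → ∀ (C₁ : ℝ), 0 ≤ C₁ → ∀ φ : ℕ → ℝ,
      (∀ j, j ≤ N → 0 ≤ φ j) →
      φ 0 ≤ C₁ →
      (∀ n, 1 ≤ n → n ≤ N →
        φ n ≤ C₁ * (1 + ((n : ℝ) * (T / N)) ^ (-1 + μ)) +
          C₂ * (T / N) *
            ∑ j ∈ Finset.range n, (((n - j : ℕ) : ℝ) * (T / N)) ^ (-1 + ν) * φ j) →
      ∀ n, 1 ≤ n → n ≤ N →
        φ n ≤ C * C₁ * (1 + ((n : ℝ) * (T / N)) ^ (-1 + μ)) := by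
  set μ' : ℝ := min μ 1 with hμ'def
  set ν' : ℝ := min ν 1 with hν'def
  have hμ'0 : 0 < μ' := lt_min hμ one_pos
  have hμ'1 : μ' ≤ 1 := min_le_right _ _
  have hν'0 : 0 < ν' := lt_min hν one_pos
  have hν'1 : ν' ≤ 1 := min_le_right _ _
  set C₂' : ℝ := C₂ * max 1 (T ^ (ν - 1)) with hC₂'def
  have hC₂'0 : 0 ≤ C₂' := mul_nonneg hC₂ (le_trans zero_le_one (le_max_left _ _))
  set C₄ : ℝ := 3 * (1/ν' + 1) + 2 * (T ^ (1-μ') + 1/μ') * (1 + 2 * T ^ ν') with hC₄def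
  have hTp1 : (0:ℝ) ≤ T ^ (1-μ') := Real.rpow_nonneg hT.le _
  have hTp2 : (0:ℝ) ≤ T ^ ν' := Real.rpow_nonneg hT.le _
  have hC₄0 : 0 < C₄ := by rw [hC₄def]; positivity
  set lam : ℝ := max 1 ((4 * C₂' * C₄ + 1) ^ ((2/ν') : ℝ)) with hlamdef
  have hlam1 : 1 ≤ lam := le_max_left _ _
  have hlam0 : 0 < lam := lt_of_lt_of_le one_pos hlam1
  have hquarter : C₂' * C₄ * lam ^ (-(ν'/2)) ≤ 1/4 := by
    set X : ℝ := 4 * C₂' * C₄ + 1 with hXdef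
    have hX1 : (1:ℝ) ≤ X := by nlinarith [mul_nonneg hC₂'0 hC₄0.le]
    have hX0 : (0:ℝ) < X := by linarith
    have hexp1 : ((2/ν') : ℝ) * (ν'/2) = 1 := by
      rw [div_mul_div_comm, div_eq_one_iff_eq (by positivity)]
      ring
    have hpow : (X ^ ((2/ν') : ℝ)) ^ (ν'/2) = X := by
      rw [← Real.rpow_mul hX0.le, hexp1, Real.rpow_one]
    have hlamX : X ≤ lam ^ (ν'/2) := by
      rw [← hpow]
      exact Real.rpow_le_rpow (Real.rpow_nonneg hX0.le _) (le_max_right _ _) (by positivity)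
    have hlX : lam ^ (-(ν'/2)) ≤ X⁻¹ := by
      rw [Real.rpow_neg hlam0.le]
      exact inv_anti₀ hX0 hlamX
    have h1 : C₂' * C₄ * lam ^ (-(ν'/2)) ≤ C₂' * C₄ * X⁻¹ :=
      mul_le_mul_of_nonneg_left hlX (mul_nonneg hC₂'0 hC₄0.le)
    refine h1.trans ?_
    have hX4 : C₂' * C₄ ≤ 1/4 * X := by rw [hXdef]; nlinarith
    calc C₂' * C₄ * X⁻¹ ≤ (1/4 * X) * X⁻¹ :=
          mul_le_mul_of_nonneg_right hX4 (inv_nonneg.mpr hX0.le)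
      _ = 1/4 * (X * X⁻¹) := by ring
      _ = 1/4 := by rw [mul_inv_cancel₀ hX0.ne']; ring
  refine ⟨4 * Real.exp (lam * T) * max 1 (1 + T ^ (μ - 1)), ?_⟩
  intro N hN C₁ hC₁ φ hφnn hφ0 hrec n hn1 hnN
  simp only [neg_add_eq_sub] at hrec ⊢
  set k : ℝ := T / N with hkdef
  have hN0 : (0:ℝ) < (N:ℝ) := by exact_mod_cast Nat.pos_of_ne_zero (by omega)
  have hk : 0 < k := div_pos hT hN0
  have hNk : (N:ℝ) * k = T := by rw [hkdef]; field_simp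
  have hkT : k ≤ T := by
    rw [← hNk]
    nth_rewrite 1 [← one_mul k]
    apply mul_le_mul_of_nonneg_right _ hk.le
    exact_mod_cast hN
  set C₁' : ℝ := C₁ * max 1 (1 + T ^ (μ - 1)) with hC₁'def
  have hC₁'0 : 0 ≤ C₁' := mul_nonneg hC₁ (le_trans zero_le_one (le_max_left _ _))
  have hC₁C₁' : C₁ ≤ C₁' := le_mul_of_one_le_right hC₁ (le_max_left _ _)
  -- the main induction
  have main : ∀ m, m ≤ N →
      φ m ≤ 2 * C₁' * ((1 + ((m:ℝ)*k) ^ (μ' - 1)) * Real.exp (lam * ((m:ℝ)*k))) := by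
    intro m
    induction m using Nat.strong_induction_on with
    | _ m ih =>
      intro hmN
      rcases Nat.eq_zero_or_pos m with rfl | hm1
      · have hx : (0:ℝ) ≤ ((0:ℕ):ℝ) * k ^ (μ' - 1) := by positivity
        simp only [Nat.cast_zero, zero_mul, mul_zero, Real.exp_zero, mul_one]
        have hx0 : (0:ℝ) ≤ (0:ℝ) ^ (μ' - 1) := Real.rpow_nonneg le_rfl _
        nlinarith [hφ0, hC₁C₁', hC₁'0, mul_nonneg hC₁'0 hx0]
      · -- inductive step
        have hmT : (m:ℝ) * k ≤ T := by
          rw [← hNk]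
          apply mul_le_mul_of_nonneg_right _ hk.le
          exact_mod_cast hmN
        have hmk : 0 < (m:ℝ) * k := by
          have : (0:ℝ) < (m:ℝ) := by exact_mod_cast hm1
          positivity
        have hE1 : 1 ≤ Real.exp (lam * ((m:ℝ)*k)) := by
          rw [← Real.exp_zero]
          apply Real.exp_le_exp.mpr
          positivity
        have hxm : (0:ℝ) ≤ ((m:ℝ)*k) ^ (μ' - 1) := Real.rpow_nonneg hmk.le _
        -- (a) first term
        have ha : C₁ * (1 + ((m:ℝ)*k) ^ (μ - 1)) ≤ C₁' * (1 + ((m:ℝ)*k) ^ (μ' - 1)) := by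
          rcases le_or_gt μ 1 with hle | hgt
          · have : μ' = μ := min_eq_left hle
            rw [this]
            apply mul_le_mul_of_nonneg_right hC₁C₁'
            have := Real.rpow_nonneg hmk.le (μ - 1)
            linarith
          · have hμ'1' : μ' = 1 := min_eq_right hgt.le
            have h1 : ((m:ℝ)*k) ^ (μ - 1) ≤ T ^ (μ - 1) :=
              Real.rpow_le_rpow hmk.le hmT (by linarith)
            have h2 : (1:ℝ) + T ^ (μ - 1) ≤ max 1 (1 + T ^ (μ - 1)) := le_max_right _ _
            have h3 : (1:ℝ) ≤ 1 + ((m:ℝ)*k) ^ (μ' - 1) := by linarith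
            calc C₁ * (1 + ((m:ℝ)*k) ^ (μ - 1)) ≤ C₁ * (1 + T ^ (μ - 1)) := by
                  apply mul_le_mul_of_nonneg_left _ hC₁
                  linarith
              _ ≤ C₁' := by
                  rw [hC₁'def]
                  apply mul_le_mul_of_nonneg_left h2 hC₁
              _ ≤ C₁' * (1 + ((m:ℝ)*k) ^ (μ' - 1)) := le_mul_of_one_le_right hC₁'0 h3
        -- (b) kernel coefficient change
        have hb : ∀ j ∈ range m, C₂ * ((((m - j:ℕ)):ℝ) * k) ^ (ν - 1) * φ j
            ≤ C₂' * (((((m - j:ℕ)):ℝ) * k) ^ (ν' - 1) * φ j) := by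
          intro j hj
          have hjm : j < m := mem_range.mp hj
          have hd1 : 1 ≤ m - j := by omega
          have hdk : 0 < (((m - j:ℕ)):ℝ) * k := by
            have : (0:ℝ) < ((m - j:ℕ):ℝ) := by exact_mod_cast hd1
            positivity
          have hdT : (((m - j:ℕ)):ℝ) * k ≤ T := by
            rw [← hNk]
            apply mul_le_mul_of_nonneg_right _ hk.le
            have : m - j ≤ N := by omega
            exact_mod_cast this
          have hφj : 0 ≤ φ j := hφnn j (by omega)
          have hcoef : C₂ * ((((m - j:ℕ)):ℝ) * k) ^ (ν - 1)
              ≤ C₂' * ((((m - j:ℕ)):ℝ) * k) ^ (ν' - 1) := by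
            rcases le_or_gt ν 1 with hle | hgt
            · have : ν' = ν := min_eq_left hle
              rw [this]
              apply mul_le_mul_of_nonneg_right _ (Real.rpow_nonneg hdk.le _)
              exact le_mul_of_one_le_right hC₂ (le_max_left _ _)
            · have hν'1' : ν' = 1 := min_eq_right hgt.le
              have h1 : ((((m - j:ℕ)):ℝ) * k) ^ (ν - 1) ≤ T ^ (ν - 1) :=
                Real.rpow_le_rpow hdk.le hdT (by linarith)
              have h2 : T ^ (ν - 1) ≤ max 1 (T ^ (ν - 1)) := le_max_right _ _
              have h3 : ((((m - j:ℕ)):ℝ) * k) ^ (ν' - 1) = 1 := by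
                rw [hν'1']; norm_num
              rw [h3, mul_one, hC₂'def]
              calc C₂ * ((((m - j:ℕ)):ℝ) * k) ^ (ν - 1) ≤ C₂ * T ^ (ν - 1) :=
                    mul_le_mul_of_nonneg_left h1 hC₂
                _ ≤ C₂ * max 1 (T ^ (ν - 1)) := mul_le_mul_of_nonneg_left h2 hC₂
          calc C₂ * ((((m - j:ℕ)):ℝ) * k) ^ (ν - 1) * φ j
              ≤ C₂' * ((((m - j:ℕ)):ℝ) * k) ^ (ν' - 1) * φ j :=
                mul_le_mul_of_nonneg_right hcoef hφj
            _ = C₂' * (((((m - j:ℕ)):ℝ) * k) ^ (ν' - 1) * φ j) := by ring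
        -- (c) apply induction hypothesis termwise
        have hc : ∀ j ∈ range m, ((((m - j:ℕ)):ℝ) * k) ^ (ν' - 1) * φ j
            ≤ 2 * C₁' * (((((m - j:ℕ)):ℝ) * k) ^ (ν' - 1) *
                ((1 + ((j:ℝ)*k) ^ (μ' - 1)) * Real.exp (lam * ((j:ℝ)*k)))) := by
          intro j hj
          have hjm : j < m := mem_range.mp hj
          have := ih j hjm (by omega)
          calc ((((m - j:ℕ)):ℝ) * k) ^ (ν' - 1) * φ j
              ≤ ((((m - j:ℕ)):ℝ) * k) ^ (ν' - 1) *
                (2 * C₁' * ((1 + ((j:ℝ)*k) ^ (μ' - 1)) * Real.exp (lam * ((j:ℝ)*k)))) :=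
                mul_le_mul_of_nonneg_left this (Real.rpow_nonneg (by positivity) _)
            _ = 2 * C₁' * (((((m - j:ℕ)):ℝ) * k) ^ (ν' - 1) *
                ((1 + ((j:ℝ)*k) ^ (μ' - 1)) * Real.exp (lam * ((j:ℝ)*k)))) := by ring
        -- put the sum together
        have hsum : C₂ * k * ∑ j ∈ range m, ((((m - j:ℕ)):ℝ) * k) ^ (ν - 1) * φ j
            ≤ 2 * C₁' * C₂' * (k * ∑ j ∈ range m, ((((m - j:ℕ)):ℝ) * k) ^ (ν' - 1) *
                ((1 + ((j:ℝ)*k) ^ (μ' - 1)) * Real.exp (lam * ((j:ℝ)*k)))) := by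
          have s1 : C₂ * k * ∑ j ∈ range m, ((((m - j:ℕ)):ℝ) * k) ^ (ν - 1) * φ j
              = k * ∑ j ∈ range m, C₂ * ((((m - j:ℕ)):ℝ) * k) ^ (ν - 1) * φ j := by
            rw [Finset.mul_sum]
            rw [Finset.mul_sum]
            apply Finset.sum_congr rfl
            intro j _
            ring
          have s2 : ∑ j ∈ range m, C₂ * ((((m - j:ℕ)):ℝ) * k) ^ (ν - 1) * φ j
              ≤ ∑ j ∈ range m, C₂' * (((((m - j:ℕ)):ℝ) * k) ^ (ν' - 1) * φ j) :=
            Finset.sum_le_sum hb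
          have s3 : ∑ j ∈ range m, (((((m - j:ℕ)):ℝ) * k) ^ (ν' - 1) * φ j)
              ≤ ∑ j ∈ range m, 2 * C₁' * (((((m - j:ℕ)):ℝ) * k) ^ (ν' - 1) *
                  ((1 + ((j:ℝ)*k) ^ (μ' - 1)) * Real.exp (lam * ((j:ℝ)*k)))) :=
            Finset.sum_le_sum hc
          calc C₂ * k * ∑ j ∈ range m, ((((m - j:ℕ)):ℝ) * k) ^ (ν - 1) * φ j
              = k * ∑ j ∈ range m, C₂ * ((((m - j:ℕ)):ℝ) * k) ^ (ν - 1) * φ j := s1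
            _ ≤ k * ∑ j ∈ range m, C₂' * (((((m - j:ℕ)):ℝ) * k) ^ (ν' - 1) * φ j) :=
                mul_le_mul_of_nonneg_left s2 hk.le
            _ = (C₂' * k) * ∑ j ∈ range m, (((((m - j:ℕ)):ℝ) * k) ^ (ν' - 1) * φ j) := by
                rw [← Finset.mul_sum]; ring
            _ ≤ (C₂' * k) * ∑ j ∈ range m, 2 * C₁' * (((((m - j:ℕ)):ℝ) * k) ^ (ν' - 1) *
                  ((1 + ((j:ℝ)*k) ^ (μ' - 1)) * Real.exp (lam * ((j:ℝ)*k)))) :=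
                mul_le_mul_of_nonneg_left s3 (by positivity)
            _ = 2 * C₁' * C₂' * (k * ∑ j ∈ range m, ((((m - j:ℕ)):ℝ) * k) ^ (ν' - 1) *
                ((1 + ((j:ℝ)*k) ^ (μ' - 1)) * Real.exp (lam * ((j:ℝ)*k)))) := by
                rw [← Finset.mul_sum]; ring
        -- apply the main sum estimate
        have hkey := aux_main_sum hμ'0 hμ'1 hν'0 hν'1 hlam1 hk hkT hm1 hmT
        set G : ℝ := (1 + ((m:ℝ)*k) ^ (μ' - 1)) * Real.exp (lam * ((m:ℝ)*k)) with hGdef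
        have hG0 : 0 ≤ G := by positivity
        have hd : 2 * C₁' * C₂' * (k * ∑ j ∈ range m, ((((m - j:ℕ)):ℝ) * k) ^ (ν' - 1) *
                ((1 + ((j:ℝ)*k) ^ (μ' - 1)) * Real.exp (lam * ((j:ℝ)*k))))
            ≤ 2 * C₁' * (C₂' * (C₄ * lam ^ (-(ν'/2)) * G)) := by
          have h1 : C₂' * (k * ∑ j ∈ range m, ((((m - j:ℕ)):ℝ) * k) ^ (ν' - 1) *
                ((1 + ((j:ℝ)*k) ^ (μ' - 1)) * Real.exp (lam * ((j:ℝ)*k))))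
              ≤ C₂' * (C₄ * lam ^ (-(ν'/2)) * G) := by
            apply mul_le_mul_of_nonneg_left _ hC₂'0
            exact hkey
          calc 2 * C₁' * C₂' * (k * ∑ j ∈ range m, ((((m - j:ℕ)):ℝ) * k) ^ (ν' - 1) *
                ((1 + ((j:ℝ)*k) ^ (μ' - 1)) * Real.exp (lam * ((j:ℝ)*k))))
              = 2 * C₁' * (C₂' * (k * ∑ j ∈ range m, ((((m - j:ℕ)):ℝ) * k) ^ (ν' - 1) *
                ((1 + ((j:ℝ)*k) ^ (μ' - 1)) * Real.exp (lam * ((j:ℝ)*k))))) := by ring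
            _ ≤ 2 * C₁' * (C₂' * (C₄ * lam ^ (-(ν'/2)) * G)) :=
                mul_le_mul_of_nonneg_left h1 (by positivity)
        have he : 2 * C₁' * (C₂' * (C₄ * lam ^ (-(ν'/2)) * G)) ≤ 2 * C₁' * ((1/4) * G) := by
          apply mul_le_mul_of_nonneg_left _ (by positivity)
          have : C₂' * (C₄ * lam ^ (-(ν'/2)) * G) = (C₂' * C₄ * lam ^ (-(ν'/2))) * G := by ring
          rw [this]
          exact mul_le_mul_of_nonneg_right hquarter hG0
        -- conclude the step
        have hφm := hrec m hm1 hmN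
        have hfirst : C₁' * (1 + ((m:ℝ)*k) ^ (μ' - 1)) ≤ C₁' * G := by
          rw [hGdef]
          calc C₁' * (1 + ((m:ℝ)*k) ^ (μ' - 1))
              = C₁' * ((1 + ((m:ℝ)*k) ^ (μ' - 1)) * 1) := by ring
            _ ≤ C₁' * ((1 + ((m:ℝ)*k) ^ (μ' - 1)) * Real.exp (lam * ((m:ℝ)*k))) := by
                apply mul_le_mul_of_nonneg_left _ hC₁'0
                apply mul_le_mul_of_nonneg_left hE1 (by positivity)
        have hCG0 : 0 ≤ C₁' * G := mul_nonneg hC₁'0 hG0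
        calc φ m ≤ C₁ * (1 + ((m:ℝ)*k) ^ (μ - 1)) +
              C₂ * k * ∑ j ∈ range m, ((((m - j:ℕ)):ℝ) * k) ^ (ν - 1) * φ j := hφm
          _ ≤ C₁' * (1 + ((m:ℝ)*k) ^ (μ' - 1)) + 2 * C₁' * ((1/4) * G) := by
              have := (hsum.trans hd).trans he
              linarith [ha]
          _ ≤ 2 * C₁' * G := by linarith [hfirst, hCG0]
  -- conclusion
  have hmain := main n hnN
  have hnT : (n:ℝ) * k ≤ T := by
    rw [← hNk]
    apply mul_le_mul_of_nonneg_right _ hk.le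
    exact_mod_cast hnN
  have hnk : 0 < (n:ℝ) * k := by
    have : (0:ℝ) < (n:ℝ) := by exact_mod_cast hn1
    positivity
  have hxn : (0:ℝ) ≤ ((n:ℝ)*k) ^ (μ - 1) := Real.rpow_nonneg hnk.le _
  have hAB : 1 + ((n:ℝ)*k) ^ (μ' - 1) ≤ 2 * (1 + ((n:ℝ)*k) ^ (μ - 1)) := by
    rcases le_or_gt μ 1 with hle | hgt
    · have : μ' = μ := min_eq_left hle
      rw [this]
      linarith
    · have hμ'1' : μ' = 1 := min_eq_right hgt.le
      have h1 : ((n:ℝ)*k) ^ (μ' - 1) = 1 := by rw [hμ'1']; norm_num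
      rw [h1]
      linarith
  have hEE : Real.exp (lam * ((n:ℝ)*k)) ≤ Real.exp (lam * T) := by
    apply Real.exp_le_exp.mpr
    exact mul_le_mul_of_nonneg_left hnT hlam0.le
  have hprod : (1 + ((n:ℝ)*k) ^ (μ' - 1)) * Real.exp (lam * ((n:ℝ)*k))
      ≤ 2 * (1 + ((n:ℝ)*k) ^ (μ - 1)) * Real.exp (lam * T) := by
    apply mul_le_mul hAB hEE (Real.exp_pos _).le
    positivity
  calc φ n ≤ 2 * C₁' * ((1 + ((n:ℝ)*k) ^ (μ' - 1)) * Real.exp (lam * ((n:ℝ)*k))) := hmain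
    _ ≤ 2 * C₁' * (2 * (1 + ((n:ℝ)*k) ^ (μ - 1)) * Real.exp (lam * T)) :=
        mul_le_mul_of_nonneg_left hprod (by positivity)
    _ = 4 * Real.exp (lam * T) * max 1 (1 + T ^ (μ - 1)) * C₁ *
        (1 + ((n:ℝ)*k) ^ (μ - 1)) := by
        rw [hC₁'def]; ring
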